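/- arXiv:1709.04902 — 3 statements merged into one kernel-verified Lean document; each statement's English description precedes it below -/
import Mathlib

section
/- Inductive soundness and completeness of the productivity transformation: for every logic program P, ground atom A ∈ B_P, and n ∈ ℕ, A ∈ T_P ↑ n if and only if there exists a ground proof term π such that the atom A augmented with extra argument π belongs to T_{P^} ↑ n, where P^ is the productivity transformation of P. -/
structure GroundClause (α : Type*) where
  head : α
  body : List α

def Tp {α : Type*} (P : Set (GroundClause α)) (S : Set α) : Set α :=
  {a | ∃ c ∈ P, c.head = a ∧ ∀ b ∈ c.body, b ∈ S}

/-- Ground proof terms over clause names `ι`: `node i [π₁,…,πₘ]` is the ground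
instance `κ_i(π₁,…,πₘ)` of the extra head argument of the `i`-th clause. -/
inductive PTm (ι : Type*) : Type _
  | node : ι → List (PTm ι) → PTm ι

/-- A logic program as an indexed family: `P i` is the set of ground instances
of the `i`-th clause of `P`. -/
def transf {α ι : Type*} (P : ι → Set (GroundClause α)) :
    Set (GroundClause (α × PTm ι)) :=
  {d | ∃ (i : ι) (c : GroundClause α) (πs : List (PTm ι)),
        c ∈ P i ∧ πs.length = c.body.length ∧
        d.head = (c.head, PTm.node i πs) ∧ d.body = c.body.zip πs}

/-! Forgetting proof terms, `Prod.fst '' ·`, semiconjugates `T_{P^}` to `T_P`: an instance of a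
clause of `P^` projects to the instance of `P` it was built from, and conversely an instance of
the `i`-th clause of `P` whose body atoms carry proof terms `π₁, …, πₘ` lifts to the instance of
`P^` with head term `κ_i(π₁, …, πₘ)`. Iterating from `∅` gives the theorem. -/

theorem List.exists_forall₂_of_forall_exists {α β : Type*} {R : α → β → Prop} :
    ∀ {l : List α}, (∀ a ∈ l, ∃ b, R a b) → ∃ l' : List β, List.Forall₂ R l l'
  | [], _ => ⟨[], .nil⟩
  | a :: l, h => by
    obtain ⟨b, hb⟩ := h a List.mem_cons_self
    obtain ⟨l', hl'⟩ :=
      exists_forall₂_of_forall_exists fun x hx => h x (List.mem_cons_of_mem a hx)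
    exact ⟨b :: l', .cons hb hl'⟩

theorem List.exists_mem_zip_of_mem {α β : Type*} {l₁ : List α} {l₂ : List β}
    (hlen : l₁.length ≤ l₂.length) {a : α} (ha : a ∈ l₁) : ∃ b, (a, b) ∈ l₁.zip l₂ := by
  rw [← List.map_fst_zip hlen, List.mem_map] at ha
  obtain ⟨⟨a', b⟩, hab, rfl⟩ := ha
  exact ⟨b, hab⟩

theorem image_fst_Tp_transf {α ι : Type*} (P : ι → Set (GroundClause α))
    (S : Set (α × PTm ι)) :
    Prod.fst '' Tp (transf P) S = Tp (⋃ i, P i) (Prod.fst '' S) := by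
  ext a
  constructor
  · rintro ⟨_, ⟨d, ⟨i, c, πs, hc, hlen, hhead, hbody⟩, rfl, hdS⟩, rfl⟩
    refine ⟨c, Set.mem_iUnion_of_mem i hc, by simp [hhead], fun b hb => ?_⟩
    obtain ⟨π, hbπ⟩ := List.exists_mem_zip_of_mem hlen.ge hb
    exact ⟨(b, π), hdS _ (hbody ▸ hbπ), rfl⟩
  · rintro ⟨c, hc, rfl, hcS⟩
    obtain ⟨i, hc⟩ := Set.mem_iUnion.1 hc
    obtain ⟨πs, hπs⟩ := List.exists_forall₂_of_forall_exists (R := fun b π => (b, π) ∈ S)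
      fun b hb => by simpa using hcS b hb
    refine ⟨(c.head, .node i πs), ⟨⟨_, c.body.zip πs⟩,
      ⟨i, c, πs, hc, hπs.length_eq.symm, rfl, rfl⟩, rfl, fun x hx => ?_⟩, rfl⟩
    exact List.forall₂_zip hπs hx

/-- inductive soundness and completeness of the productivity
transformation: for every ground atom `A` and `n`, `A ∈ T_P ↑ n` iff there is a
ground proof term `π` with `(A, π) ∈ T_{P^} ↑ n`. -/
theorem transf_iterate_up_iff {α ι : Type*} (P : ι → Set (GroundClause α))
    (A : α) (n : ℕ) :
    A ∈ (Tp (⋃ i, P i))^[n] ∅ ↔ ∃ π : PTm ι, (A, π) ∈ (Tp (transf P))^[n] ∅ := by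
  have hsemiconj : Function.Semiconj (Set.image Prod.fst) (Tp (transf P)) (Tp (⋃ i, P i)) :=
    image_fst_Tp_transf P
  rw [← Set.image_empty Prod.fst, ← (hsemiconj.iterate_right n).eq]
  simp only [Set.mem_image, Prod.exists, exists_and_right, exists_eq_right]
end

section
/- Soundness and completeness of the productivity transformation with respect to the least Herbrand model: for every logic program P and ground atom A, A ∈ M_P if and only if there exists a proof term π such that the augmentation of A with π belongs to M_{P^}. -/
/-- The least Herbrand model `M_P`: the least (pre-)fixed point of `T_P`,
which exists by Knaster–Tarski. -/
def Mp {α : Type*} (P : Set (GroundClause α)) : Set α :=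
  sInf {S | Tp P S ⊆ S}

lemma Tp_mono {α : Type*} (P : Set (GroundClause α)) {S S' : Set α} (h : S ⊆ S') :
    Tp P S ⊆ Tp P S' := by
  rintro a ⟨c, hc, hh, hb⟩
  exact ⟨c, hc, hh, fun b hbm => h (hb b hbm)⟩

lemma Mp_least {α : Type*} (P : Set (GroundClause α)) {S : Set α} (h : Tp P S ⊆ S) :
    Mp P ⊆ S := sInf_le h

lemma Tp_Mp {α : Type*} (P : Set (GroundClause α)) : Tp P (Mp P) ⊆ Mp P := by
  intro a ha
  intro S hS
  exact hS (Tp_mono P (Mp_least P hS) ha)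

lemma exists_zip_list {α β : Type*} {Q : α → β → Prop} :
    ∀ l : List α, (∀ b ∈ l, ∃ π, Q b π) →
      ∃ πs : List β, πs.length = l.length ∧ ∀ p ∈ l.zip πs, Q p.1 p.2 := by
  intro l
  induction l with
  | nil => exact fun _ => ⟨[], rfl, by simp⟩
  | cons a l ih =>
    intro h
    obtain ⟨π, hπ⟩ := h a (by simp)
    obtain ⟨πs, hlen, hall⟩ := ih (fun b hb => h b (by simp [hb]))
    refine ⟨π :: πs, by simp [hlen], ?_⟩
    intro p hp
    simp only [List.zip_cons_cons, List.mem_cons] at hp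
    rcases hp with rfl | hp
    · exact hπ
    · exact hall p hp

lemma mem_zip_of_mem {α β : Type*} :
    ∀ (l : List α) (πs : List β), πs.length = l.length →
      ∀ b ∈ l, ∃ π, (b, π) ∈ l.zip πs := by
  intro l
  induction l with
  | nil => simp
  | cons a l ih =>
    intro πs hlen b hb
    cases πs with
    | nil => simp at hlen
    | cons π πs =>
      simp only [List.length_cons, Nat.succ.injEq] at hlen
      rcases List.mem_cons.mp hb with rfl | hb
      · exact ⟨π, by simp⟩
      · obtain ⟨π', hπ'⟩ := ih πs hlen b hb
        exact ⟨π', by simp [hπ']⟩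

/-- soundness and completeness of the productivity transformation
w.r.t. the least Herbrand model: `A ∈ M_P` iff there is a proof term `π` with
`A⟨π⟩ ∈ M_{P^}`. -/
theorem transf_least_model_iff {α ι : Type*} (P : ι → Set (GroundClause α)) (A : α) :
    A ∈ Mp (⋃ i, P i) ↔ ∃ π : PTm ι, (A, π) ∈ Mp (transf P) := by
  constructor
  · intro hA
    have hS : Tp (⋃ i, P i) {a | ∃ π : PTm ι, (a, π) ∈ Mp (transf P)} ⊆
        {a | ∃ π : PTm ι, (a, π) ∈ Mp (transf P)} := by
      rintro a ⟨c, hc, hh, hb⟩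
      obtain ⟨Pi, ⟨i, rfl⟩, hci⟩ := hc
      obtain ⟨πs, hlen, hall⟩ := exists_zip_list (Q := fun b π => (b, π) ∈ Mp (transf P))
        c.body hb
      refine ⟨PTm.node i πs, ?_⟩
      apply Tp_Mp (transf P)
      refine ⟨⟨(c.head, PTm.node i πs), c.body.zip πs⟩,
        ⟨i, c, πs, hci, hlen, rfl, rfl⟩, by simp [hh], ?_⟩
      exact fun p hp => hall p hp
    obtain ⟨π, hπ⟩ := Mp_least _ hS hA
    exact ⟨π, hπ⟩
  · rintro ⟨π, hπ⟩
    have hS : Tp (transf P) {p : α × PTm ι | p.1 ∈ Mp (⋃ i, P i)} ⊆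
        {p : α × PTm ι | p.1 ∈ Mp (⋃ i, P i)} := by
      rintro ⟨a, τ⟩ ⟨d, ⟨i, c, πs, hci, hlen, hdh, hdb⟩, hh, hb⟩
      have : a ∈ Tp (⋃ i, P i) (Mp (⋃ i, P i)) := by
        refine ⟨c, Set.mem_iUnion.mpr ⟨i, hci⟩, ?_, ?_⟩
        · have := congrArg Prod.fst hh
          simpa [hdh] using this
        · intro b hbm
          obtain ⟨π', hπ'⟩ := mem_zip_of_mem c.body πs hlen b hbm
          have := hb (b, π') (hdb ▸ hπ')
          exact this
      exact Tp_Mp _ this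
    exact Mp_least _ hS hπ
end

section
/- For the transformed program P^ = { subclass(X,X,κ1(χ)) ⟸ class(X,χ); subclass(X,object,κ2(χ)) ⟸ class(X,χ); subclass(X,Z,κ3(χ1,χ2)) ⟸ extends(X,Y,χ1) ∧ subclass(Y,Z,χ2) }, every rewriting (term-matching) reduction sequence from any goal terminates; in particular the goal ⟸ subclass(A,B,χ) with χ a variable is in rewriting normal form. -/
inductive Tm : Type
  | var : ℕ → Tm
  | fn : ℕ → (n : ℕ) → (Fin n → Tm) → Tm

def Tm.subst (σ : ℕ → Tm) : Tm → Tm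
  | .var v => σ v
  | .fn f n args => .fn f n (fun i => (args i).subst σ)

abbrev Clause := Tm × List Tm

def rewriteStep (P : Set Clause) (G G' : List Tm) : Prop :=
  ∃ (pre : List Tm) (a : Tm) (post : List Tm) (c : Clause) (σ : ℕ → Tm),
    c ∈ P ∧ G = pre ++ [a] ++ post ∧ Tm.subst σ c.1 = a ∧
    G' = pre ++ c.2.map (Tm.subst σ) ++ post

def UnivObs (P : Set Clause) : Prop :=
  ∀ seq : ℕ → List Tm, ¬ ∀ n : ℕ, rewriteStep P (seq n) (seq (n + 1))

/-- Atom `subclass(t₁,t₂,π)` (symbol code 0). -/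
def subA (t1 t2 p : Tm) : Tm := Tm.fn 0 3 ![t1, t2, p]
/-- Atom `extends(t₁,t₂,π)` (symbol code 1). -/
def extA (t1 t2 p : Tm) : Tm := Tm.fn 1 3 ![t1, t2, p]
/-- Atom `class(t,π)` (symbol code 2). -/
def clsA (t p : Tm) : Tm := Tm.fn 2 2 ![t, p]
/-- Constant `object` (symbol code 3). -/
def objC : Tm := Tm.fn 3 0 (fun i => i.elim0)
/-- Proof-term constructors `κ1`, `κ2` (unary) and `κ3` (binary). -/
def k1 (p : Tm) : Tm := Tm.fn 4 1 ![p]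
def k2 (p : Tm) : Tm := Tm.fn 5 1 ![p]
def k3 (p q : Tm) : Tm := Tm.fn 6 2 ![p, q]

/-- The transformed subclass program
`{ subclass(X,X,κ1(χ)) ⟸ class(X,χ); subclass(X,object,κ2(χ)) ⟸ class(X,χ);
   subclass(X,Z,κ3(χ1,χ2)) ⟸ extends(X,Y,χ1) ∧ subclass(Y,Z,χ2) }`
with `X,Y,Z,χ1,χ2` the variables `0,1,2,3,4`. -/
def PsubT : Set Clause :=
  { (subA (Tm.var 0) (Tm.var 0) (k1 (Tm.var 3)), [clsA (Tm.var 0) (Tm.var 3)]),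
    (subA (Tm.var 0) objC (k2 (Tm.var 3)), [clsA (Tm.var 0) (Tm.var 3)]),
    (subA (Tm.var 0) (Tm.var 2) (k3 (Tm.var 3) (Tm.var 4)),
      [extA (Tm.var 0) (Tm.var 1) (Tm.var 3), subA (Tm.var 1) (Tm.var 2) (Tm.var 4)]) }

def fnc : Tm → ℕ
  | .var _ => 0
  | .fn _ _ a => 1 + ∑ i, fnc (a i)

def m : Tm → ℕ
  | .var _ => 0
  | .fn _ 0 _ => 0
  | .fn _ (n+1) a => fnc (a (Fin.last n))

def M (G : List Tm) : ℕ := (G.map m).sum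

lemma step_dec {G G' : List Tm} (h : rewriteStep PsubT G G') : M G' < M G := by
  obtain ⟨pre, a, post, c, σ, hc, hG, hm, hG'⟩ := h
  subst hG hG'
  have key : ((c.2.map (Tm.subst σ)).map m).sum < m (Tm.subst σ c.1) := by
    rcases hc with h | h | h <;> subst h <;>
      simp [m, fnc, Tm.subst, subA, extA, clsA, objC, k1, k2, k3,
        Fin.sum_univ_succ, Fin.last, PsubT] <;> omega
  rw [← hm]
  simp only [M, List.map_append, List.sum_append]
  simpa using key

/-- the transformed subclass program is universally observable —
every rewriting (term-matching) reduction sequence from every goal terminates;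
in particular the goal `⟸ subclass(A,B,χ)` with `χ` a variable is already in
rewriting normal form. -/
theorem PsubT_universally_observable :
    UnivObs PsubT ∧
    ∀ G' : List Tm, ¬ rewriteStep PsubT [subA (Tm.var 7) (Tm.var 8) (Tm.var 9)] G' := by
  constructor
  · intro seq hseq
    have hmono : ∀ n, M (seq n) + n ≤ M (seq 0) := by
      intro n
      induction n with
      | zero => simp
      | succ k ih => have := step_dec (hseq k); omega
    have := hmono (M (seq 0) + 1)
    omega
  · rintro G' ⟨pre, a, post, c, σ, hc, hG, hm, -⟩
    have hlen := congrArg List.length hG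
    simp at hlen
    have hpre : pre = [] := by
      cases pre <;> simp_all
    have hpost : post = [] := by
      cases post <;> simp_all
    subst hpre hpost
    simp at hG
    subst hG
    have hmm := congrArg m hm
    rcases hc with h | h | h <;> subst h <;>
      simp [m, fnc, Tm.subst, subA, objC, k1, k2, k3,
        Fin.sum_univ_succ, Fin.last] at hmm
end
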